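/- Let B ⊆ kQ be an admissible subcoalgebra that is homogeneous with respect to the G-grading of kQ determined by an arrow weighting δ: Q₁ → G. Then every minimal element b = Σᵢ λᵢpᵢ of B is homogeneous, i.e. all the paths pᵢ appearing in b have the same degree δ(p₁) = δ(p₂) = ⋯. -/

import Mathlib

open TensorProduct Quiver

noncomputable section
open scoped Classical

universe u v

variable (k : Type*) [Field k]

/-- The set of all paths in a quiver, with endpoints bundled. -/
abbrev PathsIn (V : Type u) [Quiver.{v + 1} V] : Type (max u (v + 1)) := Σ a b : V, Quiver.Path a b

/-- The underlying vector space of the path coalgebra: the free `k`-module on paths. -/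
abbrev PathCoalg (V : Type u) [Quiver.{v + 1} V] : Type _ := PathsIn V →₀ k

variable {V : Type u} [Quiver.{v + 1} V]

/-- The basis vector corresponding to a path. -/
def ιp (t : PathsIn V) : PathCoalg k V := Finsupp.single t 1

/-- The linear map on the path coalgebra induced by appending the arrow `e` to
paths ending at the source of `e` (and killing all other paths). -/
def consMap {b c : V} (e : b ⟶ c) : PathCoalg k V →ₗ[k] PathCoalg k V :=
  Finsupp.lsum k fun t =>
    if h : t.2.1 = b then Finsupp.lsingle ⟨t.1, c, (h ▸ t.2.2).cons e⟩ else 0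

/-- Comultiplication on basis paths:
`Δ(p) = Σ_{p = p₂p₁} p₂ ⊗ p₁ + t(p) ⊗ p + p ⊗ s(p)`, i.e. the sum of
`(second segment) ⊗ (first segment)` over all (possibly trivial) decompositions. -/
def deltaAux : ∀ {a b : V}, Quiver.Path a b → PathCoalg k V ⊗[k] PathCoalg k V
  | a, _, .nil => ιp k ⟨a, a, .nil⟩ ⊗ₜ[k] ιp k ⟨a, a, .nil⟩
  | a, c, .cons p e =>
      ιp k ⟨c, c, .nil⟩ ⊗ₜ[k] ιp k ⟨a, c, p.cons e⟩
      + TensorProduct.map (consMap k e) LinearMap.id (deltaAux p)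

/-- The comultiplication of the path coalgebra. -/
def ΔP : PathCoalg k V →ₗ[k] PathCoalg k V ⊗[k] PathCoalg k V :=
  Finsupp.lsum k fun t => LinearMap.toSpanSingleton k _ (deltaAux k t.2.2)

/-- The counit of the path coalgebra: `ε(p) = δ_{|p|,0}`. -/
def εP : PathCoalg k V →ₗ[k] k :=
  Finsupp.lsum k fun t => if t.2.2.length = 0 then LinearMap.id else 0

variable {G : Type*} [Group G]

/-- The multiplicative extension of an arrow weighting `δ : Q₁ → G` to paths:
`δ(a_n ⋯ a_1) = δ(a_n) ⋯ δ(a_1)`, with value `1` on length-zero paths. -/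
def wt (δ : ∀ {a b : V}, (a ⟶ b) → G) : ∀ {a b : V}, Quiver.Path a b → G
  | _, _, .nil => 1
  | _, _, .cons p e => δ e * wt @δ p

/-- The subspace of a tensor product spanned by elementary tensors from two
given submodules; this plays the role of `A ⊗ B` inside `M ⊗ N`. -/
def tsub {M N : Type*} [AddCommGroup M] [Module k M] [AddCommGroup N] [Module k N]
    (A : Submodule k M) (B : Submodule k N) : Submodule k (M ⊗[k] N) :=
  Submodule.span k {x | ∃ a ∈ A, ∃ b ∈ B, x = a ⊗ₜ[k] b}

theorem Finsupp.forall_of_filter_mem_of_minimal {α M : Type*} [AddCommMonoid M] [DecidableEq α]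
    {B : Set (α →₀ M)} {b : α →₀ M}
    (hmin : ∀ S : Finset α, S ⊆ b.support → S.Nonempty → S ≠ b.support → b.filter (· ∈ S) ∉ B)
    (P : α → Prop) [DecidablePred P] (hP : b.filter P ∈ B) {p : α} (hp : p ∈ b.support)
    (hPp : P p) : ∀ q ∈ b.support, P q := by
  set S := b.support.filter P
  have hfilter : b.filter (· ∈ S) = b.filter P := by
    ext t
    by_cases ht : b t = 0 <;> simp [S, Finsupp.filter_apply, ht]
  have hS : S = b.support := by
    by_contra hne
    exact hmin S (Finset.filter_subset _ _) ⟨p, Finset.mem_filter.2 ⟨hp, hPp⟩⟩ hne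
      (hfilter ▸ hP)
  intro q hq
  exact (Finset.mem_filter.1 (hS ▸ hq)).2

theorem minimal_elements_are_homogeneous (δ : ∀ {a b : V}, (a ⟶ b) → G)
    (B : Submodule k (PathCoalg k V))
    -- `B` is homogeneous: each homogeneous component of an element of `B` lies in `B`
    (hhom : ∀ x ∈ B, ∀ g : G, x.filter (fun t : PathsIn V => wt @δ t.2.2 = g) ∈ B)
    -- `b = Σᵢ λᵢ pᵢ` is a minimal element of `B`, all paths going from `x` to `y`
    (b : PathCoalg k V) (hb : b ∈ B) (x : V)
    (hmin : ∀ S : Finset (PathsIn V), S ⊆ b.support → S.Nonempty → S ≠ b.support →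
        b.filter (· ∈ S) ∉ B) :
    ∀ p ∈ b.support, ∀ q ∈ b.support, wt @δ p.2.2 = wt @δ q.2.2 := by
  intro p hp q hq
  exact (Finsupp.forall_of_filter_mem_of_minimal (B := (B : Set (PathCoalg k V))) hmin
    (fun t : PathsIn V => wt @δ t.2.2 = wt @δ p.2.2) (hhom b hb _) hp rfl q hq).symm
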